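/- arXiv:2507.00556 — 5 statements merged into one kernel-verified Lean document; each statement's English description precedes it below -/
import Mathlib

section
/- Scenario A: For a demand sequence with σ²_total > 0, the batched-order variance equals the total demand variance, σ²_agg = σ²_total, if and only if σ²_within / σ²_total = (R² − 1)/R²; i.e., order batching leaves the demand variance unchanged exactly when the within-cycle variance fraction equals (R² − 1)/R². -/
/-- Scenario A: batching leaves variance unchanged iff the within-cycle variance fraction equals `(R² − 1)/R²`. -/
theorem batching_neutral_iff
    (M R : ℕ) (hM : 0 < M) (hR : 0 < R)
    (x : Fin M → Fin R → ℝ)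
    (μ : ℝ) (hμ : μ = (∑ i, ∑ t, x i t) / (M * R))
    (σ2total : ℝ) (hσ2total : σ2total = (∑ i, ∑ t, (x i t - μ) ^ 2) / (M * R))
    (hpos : 0 < σ2total)
    (m : Fin M → ℝ) (hm : ∀ i, m i = (∑ t, x i t) / R)
    (σ2within : ℝ)
    (hσ2within : σ2within = (∑ i, (∑ t, (x i t - m i) ^ 2) / R) / M)
    (S : Fin M → ℝ) (hS : ∀ i, S i = ∑ t, x i t)
    (Sbar : ℝ) (hSbar : Sbar = (∑ i, S i) / M)
    (σ2agg : ℝ) (hσ2agg : σ2agg = (∑ i, (S i - Sbar) ^ 2) / M) :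
    σ2agg = σ2total ↔ σ2within / σ2total = ((R : ℝ) ^ 2 - 1) / (R : ℝ) ^ 2 := by
  have hRne : (R : ℝ) ≠ 0 := Nat.cast_ne_zero.mpr hR.ne'
  have hMne : (M : ℝ) ≠ 0 := Nat.cast_ne_zero.mpr hM.ne'
  -- S i = R * m i
  have hSm : ∀ i, S i = R * m i := by
    intro i; rw [hS, hm]; field_simp
  -- Sbar = R * μ
  have hSbarμ : Sbar = R * μ := by
    rw [hSbar, hμ]
    simp only [hS]
    field_simp
  -- per-cycle decomposition
  have hdec : ∀ i, (∑ t, (x i t - μ) ^ 2)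
      = (∑ t, (x i t - m i) ^ 2) + R * (m i - μ) ^ 2 := by
    intro i
    have hsum0 : (∑ t, (x i t - m i)) = 0 := by
      have : (∑ t, x i t) = R * m i := by rw [hm]; field_simp
      simp [Finset.sum_sub_distrib, this]
    have expand : ∀ t, (x i t - μ) ^ 2
        = (x i t - m i) ^ 2 + 2 * (m i - μ) * (x i t - m i) + (m i - μ) ^ 2 := by
      intro t; ring
    calc (∑ t, (x i t - μ) ^ 2)
        = ∑ t, ((x i t - m i) ^ 2 + 2 * (m i - μ) * (x i t - m i) + (m i - μ) ^ 2) := by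
          exact Finset.sum_congr rfl fun t _ => expand t
      _ = (∑ t, (x i t - m i) ^ 2) + 2 * (m i - μ) * (∑ t, (x i t - m i))
            + R * (m i - μ) ^ 2 := by
          simp [Finset.sum_add_distrib, ← Finset.mul_sum, Finset.card_univ]
      _ = (∑ t, (x i t - m i) ^ 2) + R * (m i - μ) ^ 2 := by
          rw [hsum0]; ring
  set A := ∑ i, ∑ t, (x i t - m i) ^ 2 with hA
  set B := ∑ i, (m i - μ) ^ 2 with hB
  have hT : σ2total = (A + R * B) / (M * R) := by
    rw [hσ2total]
    congr 1
    rw [Finset.sum_congr rfl fun i _ => hdec i, Finset.sum_add_distrib, ← Finset.mul_sum]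
  have hW : σ2within = A / (R * M) := by
    rw [hσ2within, ← Finset.sum_div, div_div]
  have hAgg : σ2agg = (R : ℝ) ^ 2 * B / M := by
    rw [hσ2agg]
    congr 1
    rw [Finset.mul_sum]
    refine Finset.sum_congr rfl fun i _ => ?_
    rw [hSm i, hSbarμ]; ring
  -- key identity
  have key : σ2total = σ2within + σ2agg / (R : ℝ) ^ 2 := by
    rw [hT, hW, hAgg]
    field_simp
  have hagg_eq : σ2agg = (R : ℝ) ^ 2 * (σ2total - σ2within) := by
    have hR2 : ((R : ℝ) ^ 2) ≠ 0 := pow_ne_zero 2 hRne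
    field_simp at key ⊢
    linarith
  rw [hagg_eq, div_eq_div_iff hpos.ne' (by positivity : ((R : ℝ) ^ 2) ≠ 0)]
  constructor <;> intro h <;> nlinarith [h]
end

section
/- Scenario B: For a demand sequence with σ²_total > 0, the batched-order variance is strictly less than the total demand variance, σ²_agg < σ²_total, if and only if σ²_within / σ²_total > (R² − 1)/R²; i.e., order batching dampens demand variance exactly when the within-cycle variance fraction exceeds (R² − 1)/R². -/
/-- Scenario B: batching dampens variance iff the within-cycle variance fraction exceeds `(R² − 1)/R²`. -/
theorem batching_dampens_iff
    (M R : ℕ) (hM : 0 < M) (hR : 0 < R)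
    (x : Fin M → Fin R → ℝ)
    (μ : ℝ) (hμ : μ = (∑ i, ∑ t, x i t) / (M * R))
    (σ2total : ℝ) (hσ2total : σ2total = (∑ i, ∑ t, (x i t - μ) ^ 2) / (M * R))
    (hpos : 0 < σ2total)
    (m : Fin M → ℝ) (hm : ∀ i, m i = (∑ t, x i t) / R)
    (σ2within : ℝ)
    (hσ2within : σ2within = (∑ i, (∑ t, (x i t - m i) ^ 2) / R) / M)
    (S : Fin M → ℝ) (hS : ∀ i, S i = ∑ t, x i t)
    (Sbar : ℝ) (hSbar : Sbar = (∑ i, S i) / M)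
    (σ2agg : ℝ) (hσ2agg : σ2agg = (∑ i, (S i - Sbar) ^ 2) / M) :
    σ2agg < σ2total ↔ σ2within / σ2total > ((R : ℝ) ^ 2 - 1) / (R : ℝ) ^ 2 := by
  have hRpos : (0:ℝ) < R := by exact_mod_cast hR
  have hMpos : (0:ℝ) < M := by exact_mod_cast hM
  set B : ℝ := (∑ i, (m i - μ) ^ 2) / M with hB
  have hsum : ∀ i, ∑ t, x i t = R * m i := by
    intro i; rw [hm i]; field_simp
  have hμm : μ = (∑ i, m i) / M := by
    rw [hμ, Finset.sum_congr rfl fun i _ => hsum i, ← Finset.mul_sum]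
    field_simp
  have hdecomp : ∀ i, ∑ t, (x i t - μ) ^ 2 = (∑ t, (x i t - m i) ^ 2) + R * (m i - μ) ^ 2 := by
    intro i
    have h1 : ∑ t, (x i t - μ) ^ 2
        = ∑ t, ((x i t - m i) ^ 2 + 2 * (x i t - m i) * (m i - μ) + (m i - μ) ^ 2) := by
      exact Finset.sum_congr rfl fun t _ => by ring
    have h3 : ∑ t : Fin R, (x i t - m i) = 0 := by
      rw [Finset.sum_sub_distrib, hsum i, Finset.sum_const, Finset.card_fin]
      push_cast; ring
    have h2 : ∑ t : Fin R, 2 * (x i t - m i) * (m i - μ)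
        = 2 * (m i - μ) * (∑ t, (x i t - m i)) := by
      rw [Finset.mul_sum]; exact Finset.sum_congr rfl fun t _ => by ring
    rw [h1, Finset.sum_add_distrib, Finset.sum_add_distrib, h2, h3,
      Finset.sum_const, Finset.card_fin]
    push_cast; ring
  have hwithin' : σ2within = (∑ i, ∑ t, (x i t - m i) ^ 2) / (R * M) := by
    rw [hσ2within, ← Finset.sum_div]
    field_simp
  have htot : σ2total = σ2within + B := by
    rw [hσ2total, hwithin', hB, Finset.sum_congr rfl fun i _ => hdecomp i,
      Finset.sum_add_distrib, ← Finset.mul_sum]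
    field_simp
  have hagg : σ2agg = (R:ℝ) ^ 2 * B := by
    have hSi : ∀ i, S i - Sbar = R * (m i - μ) := by
      intro i
      rw [hS, hSbar, Finset.sum_congr rfl fun j _ => (hS j).trans (hsum j),
        hsum i, ← Finset.mul_sum, hμm]
      field_simp
    rw [hσ2agg, hB, Finset.sum_congr rfl fun i _ => by rw [hSi i]]
    simp_rw [mul_pow]
    rw [← Finset.mul_sum, mul_div_assoc]
  have hR2 : (0:ℝ) < (R:ℝ) ^ 2 := by positivity
  rw [hagg, htot, gt_iff_lt, div_lt_div_iff₀ hR2 (htot ▸ hpos)]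
  constructor <;> intro h <;> nlinarith
end

section
/- Scenario C: For a demand sequence with σ²_total > 0, the batched-order variance strictly exceeds the total demand variance, σ²_agg > σ²_total, if and only if σ²_within / σ²_total < (R² − 1)/R²; i.e., order batching amplifies demand variance (the bullwhip effect occurs) exactly when the within-cycle variance fraction is below (R² − 1)/R². -/
/-!
Batching is the law of total variance in disguise. Splitting each deviation `x i t - μ` at the
cycle mean `m i` decomposes `σ²_total = σ²_within + σ²_between`, with
`σ²_between = (1/M) Σ_i (m i - μ)²`; and since `S i = R m i` and `S̄ = R μ`, the batched variance is
`σ²_agg = R² σ²_between`. So `σ²_agg > σ²_total` says `(R² - 1) σ²_between > σ²_within`, which is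
the stated bound on the within-cycle fraction after substituting `σ²_between = σ²_total - σ²_within`.
-/

open Finset

section SumOfSquares

variable {κ : Type*} [Fintype κ]

theorem sum_sub_mean_eq_zero (f : κ → ℝ) :
    ∑ t, (f t - (∑ s, f s) / Fintype.card κ) = 0 := by
  rcases isEmpty_or_nonempty κ with hκ | hκ
  · simp
  · rw [sum_sub_distrib, sum_const, card_univ, nsmul_eq_mul,
      mul_div_cancel₀ _ (by positivity), sub_self]

theorem sum_sq_sub_eq_sum_sq_sub_mean_add (f : κ → ℝ) (c : ℝ) :
    ∑ t, (f t - c) ^ 2 =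
      ∑ t, (f t - (∑ s, f s) / Fintype.card κ) ^ 2 +
        Fintype.card κ * ((∑ s, f s) / Fintype.card κ - c) ^ 2 := by
  set a := (∑ s, f s) / Fintype.card κ
  calc ∑ t, (f t - c) ^ 2
      = ∑ t, ((f t - a) ^ 2 + 2 * (a - c) * (f t - a) + (a - c) ^ 2) :=
        sum_congr rfl fun t _ => by ring
    _ = ∑ t, (f t - a) ^ 2 + 2 * (a - c) * ∑ t, (f t - a) + Fintype.card κ * (a - c) ^ 2 := by
        rw [sum_add_distrib, sum_add_distrib, ← mul_sum, sum_const, card_univ, nsmul_eq_mul]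
    _ = ∑ t, (f t - a) ^ 2 + Fintype.card κ * (a - c) ^ 2 := by
        rw [sum_sub_mean_eq_zero, mul_zero, add_zero]

end SumOfSquares

theorem sum_sum_sq_sub_eq_sum_sum_sq_sub_mean_add {ι : Type*} [Fintype ι] (R : ℕ)
    (x : ι → Fin R → ℝ) (c : ℝ) :
    ∑ i, ∑ t, (x i t - c) ^ 2 =
      ∑ i, ∑ t, (x i t - (∑ s, x i s) / R) ^ 2 + R * ∑ i, ((∑ s, x i s) / R - c) ^ 2 := by
  rw [mul_sum, ← sum_add_distrib]
  refine sum_congr rfl fun i _ => ?_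
  simpa using sum_sq_sub_eq_sum_sq_sub_mean_add (x i) c

theorem lt_mul_iff_div_lt_sub_one_div {W B r : ℝ} (hWB : 0 < W + B) (hr : 0 < r) :
    W + B < r * B ↔ W / (W + B) < (r - 1) / r := by
  rw [div_lt_div_iff₀ hWB hr]
  constructor <;> intro h <;> nlinarith

theorem batching_amplifies_iff_general
    (M R : ℕ) (hR : 0 < R)
    (x : Fin M → Fin R → ℝ)
    (μ : ℝ) (hμ : μ = (∑ i, ∑ t, x i t) / (M * R))
    (σ2total : ℝ) (hσ2total : σ2total = (∑ i, ∑ t, (x i t - μ) ^ 2) / (M * R))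
    (hpos : 0 < σ2total)
    (m : Fin M → ℝ) (hm : ∀ i, m i = (∑ t, x i t) / R)
    (σ2within : ℝ)
    (hσ2within : σ2within = (∑ i, (∑ t, (x i t - m i) ^ 2) / R) / M)
    (S : Fin M → ℝ) (hS : ∀ i, S i = ∑ t, x i t)
    (Sbar : ℝ) (hSbar : Sbar = (∑ i, S i) / M)
    (σ2agg : ℝ) (hσ2agg : σ2agg = (∑ i, (S i - Sbar) ^ 2) / M) :
    σ2agg > σ2total ↔ σ2within / σ2total < ((R : ℝ) ^ 2 - 1) / (R : ℝ) ^ 2 := by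
  have hR₀ : (R : ℝ) ≠ 0 := by positivity
  set σ2between := (∑ i, (m i - μ) ^ 2) / M
  have htotal : σ2total = σ2within + σ2between := by
    have hsum := sum_sum_sq_sub_eq_sum_sum_sq_sub_mean_add R x μ
    simp only [← hm] at hsum
    rw [hσ2total, hsum, hσ2within, ← sum_div, add_div, mul_comm (M : ℝ),
      mul_div_mul_left _ _ hR₀, div_div, mul_comm (R : ℝ)]
  have hagg : σ2agg = (R : ℝ) ^ 2 * σ2between := by
    have hSm : ∀ i, S i = R * m i := fun i => by rw [hS, hm, mul_div_cancel₀ _ hR₀]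
    have hSbarμ : Sbar = R * μ := by
      rw [hSbar, hμ, sum_congr rfl fun i _ => hS i]
      field_simp
    simp only [hσ2agg, hSm, hSbarμ, ← mul_sub, mul_pow, ← mul_sum, mul_div_assoc]
    rfl
  rw [gt_iff_lt, hagg, htotal]
  exact lt_mul_iff_div_lt_sub_one_div (htotal ▸ hpos) (by positivity)

/-- Scenario C (bullwhip effect): batching amplifies variance iff the within-cycle variance fraction is below `(R² − 1)/R²`. -/
theorem batching_amplifies_iff
    (M R : ℕ) (hM : 0 < M) (hR : 0 < R)
    (x : Fin M → Fin R → ℝ)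
    (μ : ℝ) (hμ : μ = (∑ i, ∑ t, x i t) / (M * R))
    (σ2total : ℝ) (hσ2total : σ2total = (∑ i, ∑ t, (x i t - μ) ^ 2) / (M * R))
    (hpos : 0 < σ2total)
    (m : Fin M → ℝ) (hm : ∀ i, m i = (∑ t, x i t) / R)
    (σ2within : ℝ)
    (hσ2within : σ2within = (∑ i, (∑ t, (x i t - m i) ^ 2) / R) / M)
    (S : Fin M → ℝ) (hS : ∀ i, S i = ∑ t, x i t)
    (Sbar : ℝ) (hSbar : Sbar = (∑ i, S i) / M)
    (σ2agg : ℝ) (hσ2agg : σ2agg = (∑ i, (S i - Sbar) ^ 2) / M) :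
    σ2agg > σ2total ↔ σ2within / σ2total < ((R : ℝ) ^ 2 - 1) / (R : ℝ) ^ 2 :=
  batching_amplifies_iff_general M R hR x μ hμ σ2total hσ2total hpos m hm σ2within hσ2within S hS
    Sbar hSbar σ2agg hσ2agg
end

section
/- N-retailer batched-order variance (paper's Formula (4)): Let x_1, …, x_N be demand sequences of N retailers over the same M review cycles of length R, and let Z_i = Σ_{j=1}^N S_{j,i} denote the aggregate batched order of cycle i, where S_{j,i} = Σ_t x_j i t. If the empirical cross-covariances of the cycle-sum sequences vanish pairwise, i.e. (1/M) Σ_i (S_{j,i} − S̄_j)(S_{k,i} − S̄_k) = 0 for all j ≠ k, then the empirical variance of (Z_i)_{i=1}^M equals Σ_{j=1}^N R² (σ²_{total,j} − σ²_{within,j}). -/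
/-- Paper's Formula (4): with pairwise vanishing empirical cross-covariances of
the retailers' cycle-sum sequences, the empirical variance of the aggregate
batched orders `Z_i = Σ_j S_{j,i}` equals `Σ_j R² (σ²_{total,j} − σ²_{within,j})`. -/
theorem aggregate_batched_variance
    (M R N : ℕ) (hM : 0 < M) (hR : 0 < R) (hN : 0 < N)
    (x : Fin N → Fin M → Fin R → ℝ)
    (μ : Fin N → ℝ) (hμ : ∀ j, μ j = (∑ i, ∑ t, x j i t) / (M * R))
    (σ2total : Fin N → ℝ)
    (hσ2total : ∀ j, σ2total j = (∑ i, ∑ t, (x j i t - μ j) ^ 2) / (M * R))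
    (m : Fin N → Fin M → ℝ) (hm : ∀ j i, m j i = (∑ t, x j i t) / R)
    (σ2within : Fin N → ℝ)
    (hσ2within : ∀ j, σ2within j = (∑ i, (∑ t, (x j i t - m j i) ^ 2) / R) / M)
    (S : Fin N → Fin M → ℝ) (hS : ∀ j i, S j i = ∑ t, x j i t)
    (Sbar : Fin N → ℝ) (hSbar : ∀ j, Sbar j = (∑ i, S j i) / M)
    (hcov : ∀ j k, j ≠ k → (∑ i, (S j i - Sbar j) * (S k i - Sbar k)) / M = 0)
    (Z : Fin M → ℝ) (hZ : ∀ i, Z i = ∑ j, S j i)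
    (Zbar : ℝ) (hZbar : Zbar = (∑ i, Z i) / M)
    (varZ : ℝ) (hvarZ : varZ = (∑ i, (Z i - Zbar) ^ 2) / M) :
    varZ = ∑ j, (R : ℝ) ^ 2 * (σ2total j - σ2within j) := by
  have hMne : (M:ℝ) ≠ 0 := Nat.cast_ne_zero.mpr hM.ne'
  have hRne : (R:ℝ) ≠ 0 := Nat.cast_ne_zero.mpr hR.ne'
  set d : Fin N → Fin M → ℝ := fun j i => S j i - Sbar j with hd
  -- Zbar is the sum of the Sbar's
  have hZbar' : Zbar = ∑ j, Sbar j := by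
    rw [hZbar, Finset.sum_congr rfl (fun i _ => hZ i), Finset.sum_comm,
      Finset.sum_div]
    exact Finset.sum_congr rfl fun j _ => (hSbar j).symm
  have hdiff : ∀ i, Z i - Zbar = ∑ j, d j i := by
    intro i
    rw [hZ, hZbar', ← Finset.sum_sub_distrib]
  -- cross terms vanish
  have hcross : ∀ j k, j ≠ k → ∑ i, d j i * d k i = 0 := by
    intro j k hjk
    have h := hcov j k hjk
    rw [div_eq_zero_iff] at h
    exact h.resolve_right hMne
  -- expand the square
  have hexp : ∑ i, (Z i - Zbar) ^ 2 = ∑ j, ∑ i, d j i ^ 2 := by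
    calc ∑ i, (Z i - Zbar) ^ 2 = ∑ i, ∑ j, ∑ k, d j i * d k i := by
          refine Finset.sum_congr rfl fun i _ => ?_
          rw [hdiff, sq, Finset.sum_mul_sum]
      _ = ∑ j, ∑ k, ∑ i, d j i * d k i := by
          rw [Finset.sum_comm]
          exact Finset.sum_congr rfl fun j _ => Finset.sum_comm
      _ = ∑ j, ∑ i, d j i ^ 2 := by
          refine Finset.sum_congr rfl fun j _ => ?_
          rw [Finset.sum_eq_single j]
          · exact Finset.sum_congr rfl fun i _ => (sq (d j i)).symm
          · intro k _ hk
            exact hcross j k (Ne.symm hk)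
          · intro h; exact absurd (Finset.mem_univ j) h
  -- per-retailer formula
  have hper : ∀ j, (∑ i, d j i ^ 2) / M = (R:ℝ)^2 * (σ2total j - σ2within j) := by
    intro j
    have hSm : ∀ i, S j i = R * m j i := by
      intro i; rw [hS, hm]; field_simp
    have hSbarμ : Sbar j = R * μ j := by
      rw [hSbar, hμ]
      rw [Finset.sum_congr rfl fun i _ => hS j i]
      field_simp
    have hdval : ∀ i, d j i = R * (m j i - μ j) := by
      intro i
      simp only [hd, hSm, hSbarμ]
      ring
    -- key inner identity
    have key : ∀ i, (∑ t, (x j i t - μ j) ^ 2) - (∑ t, (x j i t - m j i) ^ 2)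
        = R * (m j i - μ j) ^ 2 := by
      intro i
      have hx : ∑ t, x j i t = R * m j i := by rw [hm]; field_simp
      have h1 : ∀ t : Fin R, (x j i t - μ j) ^ 2 - (x j i t - m j i) ^ 2
          = (m j i - μ j) * (2 * x j i t - μ j - m j i) := by intro t; ring
      rw [← Finset.sum_sub_distrib, Finset.sum_congr rfl fun t _ => h1 t,
        ← Finset.mul_sum]
      have h2 : ∑ t : Fin R, (2 * x j i t - μ j - m j i)
          = 2 * (R * m j i) - R * μ j - R * m j i := by
        rw [Finset.sum_sub_distrib, Finset.sum_sub_distrib, ← Finset.mul_sum, hx]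
        simp [Finset.sum_const, Finset.card_univ, mul_comm]
      rw [h2]; ring
    have hw : σ2within j = (∑ i, ∑ t, (x j i t - m j i) ^ 2) / (M * R) := by
      rw [hσ2within, ← Finset.sum_div, div_div, mul_comm (R:ℝ)]
    have hdelta : σ2total j - σ2within j = (∑ i, (m j i - μ j) ^ 2) / M := by
      rw [hσ2total, hw, div_sub_div_same, ← Finset.sum_sub_distrib,
        Finset.sum_congr rfl fun i _ => key i, ← Finset.mul_sum]
      rw [mul_comm (M:ℝ) (R:ℝ), ← div_div, mul_div_assoc]
      field_simp
    have hsq : ∑ i, d j i ^ 2 = (R:ℝ)^2 * ∑ i, (m j i - μ j) ^ 2 := by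
      rw [Finset.mul_sum]
      exact Finset.sum_congr rfl fun i _ => by rw [hdval i]; ring
    rw [hdelta, hsq]; ring
  rw [hvarZ, hexp, Finset.sum_div]
  exact Finset.sum_congr rfl fun j _ => hper j
end

section
/- N-retailer bullwhip criterion (paper's Formula (6) and Scenarios): Let x_1, …, x_N be demand sequences of N retailers over M review cycles of length R whose cycle-sum sequences have pairwise vanishing empirical cross-covariances, and suppose every retailer has the same total demand variance σ²_{total,j} = σ² with σ² > 0. Then the empirical variance of the aggregate batched orders Z_i = Σ_j S_{j,i} strictly exceeds the aggregate non-batched variance N σ² if and only if (Σ_{j=1}^N σ²_{within,j}) / (N σ²) < (R² − 1)/R²; equality and strict damping hold under the corresponding equality and reversed inequality. -/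
/-!
By the law of total variance, the cycle sums `S_{j,i} = R m_{j,i}` of retailer `j` have empirical
variance `R² (σ² - σ²_{within,j})`. Since the cycle-sum sequences are pairwise uncorrelated, their
variances add, so `Var Z = R² (N σ² - Σ_j σ²_{within,j})`, and comparing this with `N σ²` is the
stated comparison of `Σ_j σ²_{within,j} / (N σ²)` with `(R² - 1) / R²`.
-/

open Finset

section EmpiricalMoments

variable {ι κ : Type*} [Fintype ι] [Fintype κ]

noncomputable def empMean (y : ι → ℝ) : ℝ := (∑ i, y i) / Fintype.card ι

noncomputable def empVar (y : ι → ℝ) : ℝ := (∑ i, (y i - empMean y) ^ 2) / Fintype.card ι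

noncomputable def empCov (y z : ι → ℝ) : ℝ :=
  (∑ i, (y i - empMean y) * (z i - empMean z)) / Fintype.card ι

lemma empCov_self (y : ι → ℝ) : empCov y y = empVar y := by
  simp only [empCov, empVar, sq]

lemma empMean_const_mul (a : ℝ) (y : ι → ℝ) :
    empMean (fun i => a * y i) = a * empMean y := by
  simp only [empMean, ← mul_sum, mul_div_assoc]

lemma empVar_const_mul (a : ℝ) (y : ι → ℝ) :
    empVar (fun i => a * y i) = a ^ 2 * empVar y := by
  simp only [empVar, empMean_const_mul, ← mul_sub, mul_pow, ← mul_sum, mul_div_assoc]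

lemma empMean_sum (f : κ → ι → ℝ) :
    empMean (fun i => ∑ j, f j i) = ∑ j, empMean (f j) := by
  simp only [empMean, ← sum_div]
  rw [sum_comm]

lemma empVar_sum (f : κ → ι → ℝ) :
    empVar (fun i => ∑ j, f j i) = ∑ j, ∑ k, empCov (f j) (f k) := by
  simp only [empVar, empCov, empMean_sum, ← sum_sub_distrib, sq, sum_mul_sum, ← sum_div]
  rw [sum_comm]
  simp_rw [sum_comm (γ := ι)]

lemma empVar_sum_of_pairwise_empCov_eq_zero (f : κ → ι → ℝ)
    (h : Pairwise fun j k => empCov (f j) (f k) = 0) :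
    empVar (fun i => ∑ j, f j i) = ∑ j, empVar (f j) := by
  rw [empVar_sum]
  refine sum_congr rfl fun j _ => ?_
  rw [sum_eq_single j (fun k _ hkj => h hkj.symm) (by simp), empCov_self]

lemma sum_sub_empMean (y : ι → ℝ) : ∑ i, (y i - empMean y) = 0 := by
  rcases isEmpty_or_nonempty ι with hι | hι
  · simp
  · rw [sum_sub_distrib, sum_const, card_univ, nsmul_eq_mul, empMean,
      mul_div_cancel₀ _ (by positivity), sub_self]

lemma sum_sq_sub_eq_sum_sq_sub_empMean_add (y : ι → ℝ) (c : ℝ) :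
    ∑ i, (y i - c) ^ 2 = ∑ i, (y i - empMean y) ^ 2 + Fintype.card ι * (empMean y - c) ^ 2 := by
  have hsplit : ∀ i, (y i - c) ^ 2 =
      (y i - empMean y) ^ 2 + 2 * (empMean y - c) * (y i - empMean y) + (empMean y - c) ^ 2 :=
    fun i => by ring
  simp only [hsplit, sum_add_distrib, ← mul_sum, sum_sub_empMean, sum_const, card_univ,
    nsmul_eq_mul]
  ring

lemma empMean_uncurry (x : κ → ι → ℝ) :
    empMean (Function.uncurry x) = empMean (fun k => empMean (x k)) := by
  simp only [empMean, Fintype.sum_prod_type, Function.uncurry_apply_pair, Fintype.card_prod,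
    Nat.cast_mul]
  rw [← sum_div, div_div, mul_comm]

lemma empVar_uncurry [Nonempty ι] (x : κ → ι → ℝ) :
    empVar (Function.uncurry x) =
      empMean (fun k => empVar (x k)) + empVar (fun k => empMean (x k)) := by
  have hι : (Fintype.card ι : ℝ) ≠ 0 := by positivity
  rw [empVar, empMean_uncurry, Fintype.sum_prod_type]
  simp only [Function.uncurry_apply_pair]
  rw [sum_congr rfl fun k _ => sum_sq_sub_eq_sum_sq_sub_empMean_add (x k) _, sum_add_distrib,
    ← mul_sum, Fintype.card_prod, Nat.cast_mul, empVar.eq_1 (fun k => empMean (x k)),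
    empMean.eq_1 (fun k => empVar (x k))]
  simp only [empVar, ← sum_div]
  field_simp

end EmpiricalMoments

section Criterion

variable {c r w : ℝ}

lemma lt_mul_sub_iff_div_lt (hc : 0 < c) (hr : 0 < r) :
    c < r * (c - w) ↔ w / c < (r - 1) / r := by
  rw [div_lt_div_iff₀ hc hr]
  constructor <;> intro h <;> linarith

lemma mul_sub_eq_iff_div_eq (hc : 0 < c) (hr : 0 < r) :
    r * (c - w) = c ↔ w / c = (r - 1) / r := by
  rw [div_eq_div_iff hc.ne' hr.ne']
  constructor <;> intro h <;> linarith

lemma mul_sub_lt_iff_lt_div (hc : 0 < c) (hr : 0 < r) :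
    r * (c - w) < c ↔ (r - 1) / r < w / c := by
  rw [div_lt_div_iff₀ hr hc]
  constructor <;> intro h <;> linarith

end Criterion

theorem aggregate_bullwhip_criterion_general
    (M R N : ℕ) (hR : 0 < R) (hN : 0 < N)
    (x : Fin N → Fin M → Fin R → ℝ)
    (μ : Fin N → ℝ) (hμ : ∀ j, μ j = (∑ i, ∑ t, x j i t) / (M * R))
    (σ2total : Fin N → ℝ)
    (hσ2total : ∀ j, σ2total j = (∑ i, ∑ t, (x j i t - μ j) ^ 2) / (M * R))
    (σ2 : ℝ) (hσ2 : ∀ j, σ2total j = σ2) (hσ2pos : 0 < σ2)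
    (m : Fin N → Fin M → ℝ) (hm : ∀ j i, m j i = (∑ t, x j i t) / R)
    (σ2within : Fin N → ℝ)
    (hσ2within : ∀ j, σ2within j = (∑ i, (∑ t, (x j i t - m j i) ^ 2) / R) / M)
    (S : Fin N → Fin M → ℝ) (hS : ∀ j i, S j i = ∑ t, x j i t)
    (Sbar : Fin N → ℝ) (hSbar : ∀ j, Sbar j = (∑ i, S j i) / M)
    (hcov : ∀ j k, j ≠ k → (∑ i, (S j i - Sbar j) * (S k i - Sbar k)) / M = 0)
    (Z : Fin M → ℝ) (hZ : ∀ i, Z i = ∑ j, S j i)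
    (Zbar : ℝ) (hZbar : Zbar = (∑ i, Z i) / M)
    (varZ : ℝ) (hvarZ : varZ = (∑ i, (Z i - Zbar) ^ 2) / M) :
    ((N : ℝ) * σ2 < varZ ↔
      (∑ j, σ2within j) / ((N : ℝ) * σ2) < ((R : ℝ) ^ 2 - 1) / (R : ℝ) ^ 2) ∧
    (varZ = (N : ℝ) * σ2 ↔
      (∑ j, σ2within j) / ((N : ℝ) * σ2) = ((R : ℝ) ^ 2 - 1) / (R : ℝ) ^ 2) ∧
    (varZ < (N : ℝ) * σ2 ↔
      (∑ j, σ2within j) / ((N : ℝ) * σ2) > ((R : ℝ) ^ 2 - 1) / (R : ℝ) ^ 2) := by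
  have : Nonempty (Fin R) := Fin.pos_iff_nonempty.mp hR
  have hS' : ∀ j, S j = fun i => R * empMean (x j i) := fun j => funext fun i => by
    rw [hS, empMean, Fintype.card_fin, mul_div_cancel₀ _ (by positivity)]
  have hσ2' : ∀ j, σ2 = empVar (Function.uncurry (x j)) := fun j => by
    simp only [← hσ2 j, hσ2total, hμ, empVar, empMean, Fintype.sum_prod_type,
      Function.uncurry_apply_pair, Fintype.card_prod, Fintype.card_fin, Nat.cast_mul]
  have hσ2within' : ∀ j, σ2within j = empMean (fun i => empVar (x j i)) := fun j => by
    simp only [hσ2within, hm, empVar, empMean, Fintype.card_fin]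
  have hcov' : Pairwise fun j k => empCov (S j) (S k) = 0 := fun j k hjk => by
    simpa only [empCov, empMean, hSbar, Fintype.card_fin] using hcov j k hjk
  have hvarS : ∀ j, empVar (S j) = R ^ 2 * (σ2 - σ2within j) := fun j => by
    rw [hS', empVar_const_mul, hσ2' j, empVar_uncurry, hσ2within']
    ring
  have hvarZ' : varZ = R ^ 2 * (N * σ2 - ∑ j, σ2within j) := by
    have hvarZ_empVar : varZ = empVar (fun i => ∑ j, S j i) := by
      simp only [hvarZ, hZbar, hZ, empVar, empMean, Fintype.card_fin]
    rw [hvarZ_empVar, empVar_sum_of_pairwise_empCov_eq_zero _ hcov',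
      sum_congr rfl fun j _ => hvarS j, ← mul_sum, sum_sub_distrib, sum_const, card_univ,
      Fintype.card_fin, nsmul_eq_mul]
  have hc : 0 < (N : ℝ) * σ2 := by positivity
  have hr : 0 < (R : ℝ) ^ 2 := by positivity
  rw [hvarZ', gt_iff_lt]
  exact ⟨lt_mul_sub_iff_div_lt hc hr, mul_sub_eq_iff_div_eq hc hr, mul_sub_lt_iff_lt_div hc hr⟩

/-- Paper's Formula (6) and Scenarios for `N` retailers: with pairwise vanishing
cross-covariances of cycle sums and common total variance `σ² > 0`, the aggregate
batched-order variance exceeds `N σ²` iff `(Σ_j σ²_{within,j}) / (N σ²) < (R² − 1)/R²`;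
equality and strict damping hold under the corresponding equality and reversed
inequality. -/
theorem aggregate_bullwhip_criterion
    (M R N : ℕ) (hM : 0 < M) (hR : 0 < R) (hN : 0 < N)
    (x : Fin N → Fin M → Fin R → ℝ)
    (μ : Fin N → ℝ) (hμ : ∀ j, μ j = (∑ i, ∑ t, x j i t) / (M * R))
    (σ2total : Fin N → ℝ)
    (hσ2total : ∀ j, σ2total j = (∑ i, ∑ t, (x j i t - μ j) ^ 2) / (M * R))
    (σ2 : ℝ) (hσ2 : ∀ j, σ2total j = σ2) (hσ2pos : 0 < σ2)
    (m : Fin N → Fin M → ℝ) (hm : ∀ j i, m j i = (∑ t, x j i t) / R)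
    (σ2within : Fin N → ℝ)
    (hσ2within : ∀ j, σ2within j = (∑ i, (∑ t, (x j i t - m j i) ^ 2) / R) / M)
    (S : Fin N → Fin M → ℝ) (hS : ∀ j i, S j i = ∑ t, x j i t)
    (Sbar : Fin N → ℝ) (hSbar : ∀ j, Sbar j = (∑ i, S j i) / M)
    (hcov : ∀ j k, j ≠ k → (∑ i, (S j i - Sbar j) * (S k i - Sbar k)) / M = 0)
    (Z : Fin M → ℝ) (hZ : ∀ i, Z i = ∑ j, S j i)
    (Zbar : ℝ) (hZbar : Zbar = (∑ i, Z i) / M)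
    (varZ : ℝ) (hvarZ : varZ = (∑ i, (Z i - Zbar) ^ 2) / M) :
    ((N : ℝ) * σ2 < varZ ↔
      (∑ j, σ2within j) / ((N : ℝ) * σ2) < ((R : ℝ) ^ 2 - 1) / (R : ℝ) ^ 2) ∧
    (varZ = (N : ℝ) * σ2 ↔
      (∑ j, σ2within j) / ((N : ℝ) * σ2) = ((R : ℝ) ^ 2 - 1) / (R : ℝ) ^ 2) ∧
    (varZ < (N : ℝ) * σ2 ↔
      (∑ j, σ2within j) / ((N : ℝ) * σ2) > ((R : ℝ) ^ 2 - 1) / (R : ℝ) ^ 2) :=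
  aggregate_bullwhip_criterion_general M R N hR hN x μ hμ σ2total hσ2total σ2 hσ2 hσ2pos m hm
    σ2within hσ2within S hS Sbar hSbar hcov Z hZ Zbar hZbar varZ hvarZ
end
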